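/- Let K be a finite simplicial complex and a a vertex dominated by a'. Then the inclusion of the subcomplex K \ a (all simplices of K not containing a) into K is a homotopy equivalence (in particular, the deletion of a dominated vertex preserves the homotopy type of the geometric realization). -/

import Mathlib

variable {V : Type*} [Fintype V] [DecidableEq V]

/-- A (finite abstract) simplicial complex: a collection of finite subsets of
the vertex set closed under taking subsets. -/
def IsComplex (K : Finset (Finset V)) : Prop :=
  ∀ σ ∈ K, ∀ τ ⊆ σ, τ ∈ K

/-- A maximal simplex of `K`. -/
def IsMaximal (K : Finset (Finset V)) (σ : Finset V) : Prop :=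
  σ ∈ K ∧ ∀ τ ∈ K, σ ⊆ τ → σ = τ

/-- The geometric realization of an abstract simplicial complex `K` on the
finite vertex set `V`, as the set of convex-coefficient functions whose
support is a simplex of `K`. -/
def realization (K : Finset (Finset V)) : Set (V → ℝ) :=
  {f | (∀ v, 0 ≤ f v) ∧ (∑ v, f v) = 1 ∧
    (Finset.univ.filter fun v => f v ≠ 0) ∈ K}

/-- The deletion `K \ a`: all simplices of `K` not containing `a`. -/
def deleteVertex (K : Finset (Finset V)) (a : V) : Finset (Finset V) :=
  K.filter fun σ => a ∉ σ

/-!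
Moving the barycentric coordinate at `a` onto `a'` gives a map `r` that lands in `K \ a`,
fixes it pointwise, and is joined to the identity by the straight-line homotopy inside `K`:
for a point with `a` in its support `σ`, domination puts `σ ∪ {a'}` in `K`, and both the
point and its image lie in the closed face of that simplex.
-/

section SegmentRetraction

variable {E : Type*} [TopologicalSpace E] [AddCommGroup E] [Module ℝ E]
  [IsTopologicalAddGroup E] [ContinuousSMul ℝ E]

theorem exists_homotopyEquiv_inclusion_of_segment_retraction {A X : Set E} (hAX : A ⊆ X)
    (r : E → E) (hr : Continuous r) (hrX : ∀ x ∈ X, r x ∈ A) (hrA : ∀ x ∈ A, r x = x)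
    (hseg : ∀ x ∈ X, segment ℝ (r x) x ⊆ X) :
    ∃ h : ContinuousMap.HomotopyEquiv A X, ⇑h.toFun = Set.inclusion hAX := by
  let i : C(A, X) := ⟨Set.inclusion hAX, continuous_inclusion hAX⟩
  let ρ : C(X, A) :=
    ⟨fun x => ⟨r x, hrX x x.2⟩, (hr.comp continuous_subtype_val).subtype_mk _⟩
  have hρi : ρ.comp i = ContinuousMap.id A := by
    ext x : 2
    exact hrA x x.2
  refine ⟨⟨i, ρ, hρi ▸ ContinuousMap.Homotopic.refl _, ⟨?_⟩⟩, rfl⟩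
  exact
    { toFun := fun p => ⟨AffineMap.lineMap (r p.2) p.2 (p.1 : ℝ),
        hseg _ p.2.2 (lineMap_mem_segment ℝ _ _ p.1.2)⟩
      continuous_toFun := by fun_prop
      map_zero_left := fun x => Subtype.ext (AffineMap.lineMap_apply_zero _ _)
      map_one_left := fun x => Subtype.ext (AffineMap.lineMap_apply_one _ _) }

end SegmentRetraction

section Complex

variable {ι : Type*}

theorem exists_isMaximal_superset {K : Finset (Finset ι)} {σ : Finset ι} (hσ : σ ∈ K) :
    ∃ τ, IsMaximal K τ ∧ σ ⊆ τ := by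
  classical
  obtain ⟨τ, hτ, hmax⟩ :=
    (K.filter (σ ⊆ ·)).exists_maximal ⟨σ, Finset.mem_filter.2 ⟨hσ, le_rfl⟩⟩
  rw [Finset.mem_filter] at hτ
  refine ⟨τ, ⟨hτ.1, fun ρ hρ hτρ => ?_⟩, hτ.2⟩
  exact le_antisymm hτρ (hmax (Finset.mem_filter.2 ⟨hρ, hτ.2.trans hτρ⟩) hτρ)

theorem insert_mem_of_dominated [DecidableEq ι] {K : Finset (Finset ι)} (hK : IsComplex K)
    {a a' : ι}     (hdom : ∀ σ : Finset ι, IsMaximal K σ → a ∈ σ → a' ∈ σ)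
    {σ : Finset ι} (hσ : σ ∈ K) (haσ : a ∈ σ) : insert a' σ ∈ K := by
  obtain ⟨τ, hτ, hστ⟩ := exists_isMaximal_superset hσ
  exact hK τ hτ.1 _ (Finset.insert_subset (hdom τ hτ (hστ haσ)) hστ)

end Complex

section ClosedFace

variable {ι : Type*} [Fintype ι]

def closedFace (σ : Finset ι) : Set (ι → ℝ) :=
  {f | f ∈ stdSimplex ℝ ι ∧ ∀ v ∉ σ, f v = 0}

theorem convex_closedFace (σ : Finset ι) : Convex ℝ (closedFace σ) :=
  fun _ hf _ hg _ _ hs ht hst =>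
    ⟨convex_stdSimplex ℝ ι hf.1 hg.1 hs ht hst, fun v hv => by simp [hf.2 v hv, hg.2 v hv]⟩

theorem closedFace_mono {σ τ : Finset ι} (h : σ ⊆ τ) : closedFace σ ⊆ closedFace τ :=
  fun _ hf => ⟨hf.1, fun v hv => hf.2 v (fun hvσ => hv (h hvσ))⟩

theorem closedFace_subset_realization {K : Finset (Finset ι)} (hK : IsComplex K)
    {σ : Finset ι} (hσ : σ ∈ K) : closedFace σ ⊆ realization K := by
  refine fun f hf => ⟨hf.1.1, hf.1.2, hK σ hσ _ fun v hv => ?_⟩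
  by_contra hvσ
  exact (Finset.mem_filter.1 hv).2 (hf.2 v hvσ)

theorem mem_closedFace_support {K : Finset (Finset ι)} {f : ι → ℝ}
    (hf : f ∈ realization K) :
    f ∈ closedFace (Finset.univ.filter fun v => f v ≠ 0) :=
  ⟨⟨hf.1, hf.2.1⟩, fun v hv => by simpa using hv⟩

theorem mem_realization_deleteVertex_iff [DecidableEq ι] {K : Finset (Finset ι)} {a : ι}
    {f : ι → ℝ} :
    f ∈ realization (deleteVertex K a) ↔ f ∈ realization K ∧ f a = 0 := by
  simp only [realization, deleteVertex, Set.mem_ofPred_eq, Finset.mem_filter,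
    Finset.mem_univ, true_and, not_not]
  tauto

end ClosedFace

section PushCoord

variable {ι : Type*} [DecidableEq ι] {a a' : ι}

def pushCoord (a a' : ι) (f : ι → ℝ) : ι → ℝ :=
  f + Pi.single a' (f a) - Pi.single a (f a)

theorem continuous_pushCoord : Continuous (pushCoord a a') := by
  have hsingle (b : ι) : Continuous fun f : ι → ℝ => (Pi.single b (f a) : ι → ℝ) :=
    (continuous_single b).comp (continuous_apply a)
  exact (continuous_id.add (hsingle a')).sub (hsingle a)

theorem pushCoord_apply_self (hne : a' ≠ a) (f : ι → ℝ) : pushCoord a a' f a = 0 := by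
  simp [pushCoord, Pi.single_eq_of_ne hne.symm]

theorem pushCoord_apply_of_ne (f : ι → ℝ) {v : ι} (hva : v ≠ a) (hva' : v ≠ a') :
    pushCoord a a' f v = f v := by
  simp [pushCoord, Pi.single_eq_of_ne hva, Pi.single_eq_of_ne hva']

theorem pushCoord_of_apply_eq_zero {f : ι → ℝ} (hfa : f a = 0) : pushCoord a a' f = f := by
  simp [pushCoord, hfa]

theorem pushCoord_mem_stdSimplex [Fintype ι] (hne : a' ≠ a) {f : ι → ℝ}
    (hf : f ∈ stdSimplex ℝ ι) :
    pushCoord a a' f ∈ stdSimplex ℝ ι := by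
  refine ⟨fun v => ?_, ?_⟩
  · rcases eq_or_ne v a with rfl | hva
    · rw [pushCoord_apply_self hne]
    rcases eq_or_ne v a' with rfl | hva'
    · simpa [pushCoord, Pi.single_eq_of_ne hva] using add_nonneg (hf.1 v) (hf.1 a)
    · rw [pushCoord_apply_of_ne f hva hva']
      exact hf.1 v
  · simp [pushCoord, Finset.sum_add_distrib, Finset.sum_sub_distrib, hf.2]

theorem pushCoord_mem_closedFace [Fintype ι] (hne : a' ≠ a) {σ : Finset ι} {f : ι → ℝ}
    (hf : f ∈ closedFace σ) : pushCoord a a' f ∈ closedFace (insert a' σ) := by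
  refine ⟨pushCoord_mem_stdSimplex hne hf.1, fun v hv => ?_⟩
  rw [Finset.mem_insert, not_or] at hv
  obtain ⟨hva', hvσ⟩ := hv
  rcases eq_or_ne v a with rfl | hva
  · exact pushCoord_apply_self hne f
  · rw [pushCoord_apply_of_ne f hva hva', hf.2 v hvσ]

theorem segment_pushCoord_subset_realization [Fintype ι] {K : Finset (Finset ι)}
    (hK : IsComplex K) (hne : a' ≠ a)
    (hdom : ∀ σ : Finset ι, IsMaximal K σ → a ∈ σ → a' ∈ σ)
    {f : ι → ℝ} (hf : f ∈ realization K) :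
    segment ℝ (pushCoord a a' f) f ⊆ realization K := by
  by_cases hfa : f a = 0
  · rw [pushCoord_of_apply_eq_zero hfa, segment_same, Set.singleton_subset_iff]
    exact hf
  have hσ := insert_mem_of_dominated hK hdom hf.2.2 (by simpa using hfa)
  have hfσ := mem_closedFace_support hf
  exact ((convex_closedFace _).segment_subset (pushCoord_mem_closedFace hne hfσ)
    (closedFace_mono (Finset.subset_insert _ _) hfσ)).trans
    (closedFace_subset_realization hK hσ)

end PushCoord

theorem stmt11_general (K : Finset (Finset V)) (hK : IsComplex K)
    (a a' : V) (hne : a' ≠ a)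
    (hdom : ∀ σ : Finset V, IsMaximal K σ → a ∈ σ → a' ∈ σ)
    (hsub : realization (deleteVertex K a) ⊆ realization K) :
    ∃ h : ContinuousMap.HomotopyEquiv
        (realization (deleteVertex K a)) (realization K),
      ⇑h.toFun = Set.inclusion hsub := by
  have hseg := fun f (hf : f ∈ realization K) =>
    segment_pushCoord_subset_realization hK hne hdom hf
  refine exists_homotopyEquiv_inclusion_of_segment_retraction hsub (pushCoord a a')
    continuous_pushCoord (fun f hf => ?_) (fun f hf => ?_) hseg
  · exact mem_realization_deleteVertex_iff.2
      ⟨hseg f hf (left_mem_segment ℝ _ _), pushCoord_apply_self hne f⟩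
  · exact pushCoord_of_apply_eq_zero (mem_realization_deleteVertex_iff.1 hf).2

/-- If `a` is a vertex of a finite simplicial complex `K`
dominated by `a' ≠ a` (every maximal simplex containing `a` contains `a'`),
then the inclusion of the geometric realization of `K \ a` into that of `K`
is a homotopy equivalence. -/
theorem stmt11 (K : Finset (Finset V)) (hK : IsComplex K)
    (a a' : V) (ha : ({a} : Finset V) ∈ K) (hne : a' ≠ a)
    (hdom : ∀ σ : Finset V, IsMaximal K σ → a ∈ σ → a' ∈ σ)
    (hsub : realization (deleteVertex K a) ⊆ realization K) :
    ∃ h : ContinuousMap.HomotopyEquiv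
        (realization (deleteVertex K a)) (realization K),
      ⇑h.toFun = Set.inclusion hsub :=
  stmt11_general K hK a a' hne hdom hsub
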